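/- arXiv:1801.07858 — 2 statements merged into one kernel-verified Lean document; each statement's English description precedes it below -/
import Mathlib

section
/- Let d = 2. Every L²-normalized Laplace eigenfunction ψ on 𝕋² satisfies ∫_{𝕋²} |ψ|⁴ dx ≤ 3; equivalently, ‖ψ‖_{L⁴(𝕋²)} ≤ 3^{1/4}. -/
open MeasureTheory Real BigOperators ComplexConjugate

noncomputable section

instance : Fact (0 < 2 * π) := ⟨by positivity⟩

/-- The flat torus `𝕋^d = ℝ^d/(2πℤ)^d`. -/
abbrev Td (d : ℕ) := Fin d → AddCircle (2 * π)

/-- The normalized Haar probability measure on the flat torus. -/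
def haarT (d : ℕ) : Measure (Td d) :=
  Measure.pi fun _ : Fin d => AddCircle.haarAddCircle

/-- The character `e_k(x) = e^{i⟨k,x⟩}` for `k ∈ ℤ^d`. -/
def eChar {d : ℕ} (k : Fin d → ℤ) (x : Td d) : ℂ := ∏ i, fourier (k i) (x i)

/-- Euclidean norm of a lattice point of `ℤ^d`. -/
def znorm {d : ℕ} (k : Fin d → ℤ) : ℝ := Real.sqrt (∑ i, ((k i : ℝ)) ^ 2)

/-- The primitive lattice point `n̂` generating `n ≠ 0`: divide out the gcd of coordinates. -/
def primPart {d : ℕ} (n : Fin d → ℤ) : Fin d → ℤ := fun i => n i / Finset.univ.gcd n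

/-- Fourier coefficient `â_n = ∫ a(x) e^{-i⟨n,x⟩} dx` of `a ∈ L²(𝕋^d)`. -/
def fcoef {d : ℕ} (a : Td d → ℂ) (n : Fin d → ℤ) : ℂ :=
  ∫ x, a x * conj (eChar n x) ∂(haarT d)

/-- Fourier transform `μ̂(n) = ∫ e^{-i⟨n,x⟩} dμ(x)` of a measure on `𝕋^d`. -/
def muF {d : ℕ} (μ : Measure (Td d)) (n : Fin d → ℤ) : ℂ :=
  ∫ x, conj (eChar n x) ∂μ

/-- `N(λ) = #{k ∈ ℤ^d : ‖k‖ ≤ λ}`, the spectral counting function. -/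
def latticeCount (d : ℕ) (lam : ℝ) : ℕ := Set.ncard {k : Fin d → ℤ | znorm k ≤ lam}

/-- An eigenbasis of `L²(𝕋^d)`: an orthonormal basis `(ψ_j)` of Laplace eigenfunctions
`ψ_j = ∑_{‖k‖ = Λ j} c_j(k) e_k`, with nondecreasing eigenvalues `(Λ j)²` (nonnegative
integers), orthonormality and completeness expressed via the Fourier coefficients. -/
structure Eigenbasis (d : ℕ) where
  ψ : ℕ → Td d → ℂ
  Λ : ℕ → ℝ
  c : ℕ → (Fin d → ℤ) → ℂ
  nonneg : ∀ j, 0 ≤ Λ j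
  mono : Monotone Λ
  eig_int : ∀ j, ∃ E : ℕ, Λ j ^ 2 = E
  repr : ∀ j x, ψ j x = ∑' k : Fin d → ℤ, c j k * eChar k x
  supp : ∀ j k, c j k ≠ 0 → znorm k = Λ j
  ortho : ∀ i j, ∑' k : Fin d → ℤ, c i k * conj (c j k) = if i = j then 1 else 0
  complete : ∀ k l : Fin d → ℤ, ∑' j : ℕ, c j k * conj (c j l) = if k = l then 1 else 0

/-- A function on the torus is smooth if its `(2πℤ)^d`-periodic lift to `ℝ^d` is `C^∞`. -/
def SmoothOnTorus {d : ℕ} (a : Td d → ℂ) : Prop :=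
  ContDiff ℝ (⊤ : ℕ∞) fun x : Fin d → ℝ => a fun i => (x i : AddCircle (2 * π))

/-! Expanding `|ψ|² = ∑ₙ a(n) eₙ` with `a(n) = ∑_{k - l = n} c_k c̄_l`, Parseval gives
`∫ |ψ|⁴ = ∑ₙ |a(n)|²`. Here `a(0) = ∑ |c_k|² = 1`, while for `n ≠ 0` at most two lattice points `k`
have both `k` and `k - n` on the circle `‖k‖² = E` (they form the pair `{k, n - k}`), so by
Cauchy–Schwarz `|a(n)|² ≤ 2 ∑_{k - l = n} |c_k|² |c_l|²`; summing over `n` bounds the rest by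
`2 (∑ |c_k|²)² = 2`. -/

open Finset Pointwise

theorem integral_fourier_haarAddCircle {T : ℝ} [hT : Fact (0 < T)] (n : ℤ) :
    ∫ x, fourier n x ∂(AddCircle.haarAddCircle (T := T)) = if n = 0 then 1 else 0 := by
  split_ifs with hn
  · simp [hn]
  · exact integral_eq_zero_of_add_right_eq_neg (fourier_add_half_inv_index hn hT.out)

instance {d : ℕ} : IsProbabilityMeasure (haarT d) := by
  unfold haarT; infer_instance

section eChar

variable {d : ℕ}

theorem eChar_add (k l : Fin d → ℤ) (x : Td d) : eChar (k + l) x = eChar k x * eChar l x := by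
  simp only [eChar, Pi.add_apply, fourier_add, prod_mul_distrib]

theorem conj_eChar (k : Fin d → ℤ) (x : Td d) : conj (eChar k x) = eChar (-k) x := by
  simp only [eChar, map_prod, Pi.neg_apply, fourier_neg]

theorem eChar_mul_conj (k l : Fin d → ℤ) (x : Td d) :
    eChar k x * conj (eChar l x) = eChar (k - l) x := by
  rw [conj_eChar, ← eChar_add, sub_eq_add_neg]

theorem continuous_eChar (k : Fin d → ℤ) : Continuous (eChar k) :=
  continuous_finsetProd _ fun i _ => (map_continuous (fourier (k i))).comp (continuous_apply i)

theorem integrable_eChar (k : Fin d → ℤ) : Integrable (eChar k) (haarT d) :=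
  (continuous_eChar k).integrable_of_hasCompactSupport (isClosed_tsupport _).isCompact

theorem integral_eChar (k : Fin d → ℤ) : ∫ x, eChar k x ∂(haarT d) = if k = 0 then 1 else 0 := by
  simp only [eChar, haarT, integral_fintype_prod_eq_prod (fun i => fourier (k i)),
    integral_fourier_haarAddCircle, prod_boole, mem_univ, true_implies, funext_iff, Pi.zero_apply]

end eChar

theorem Finset.sum_sum_eq_sum_sub {G M : Type*} [AddCommGroup G] [DecidableEq G] [AddCommMonoid M]
    (S : Finset G) (f : G → G → M) :
    ∑ k ∈ S, ∑ l ∈ S, f k l = ∑ n ∈ S - S, ∑ k ∈ S with k - n ∈ S, f k (k - n) := by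
  rw [sum_comm' (s := S - S) (t := fun n => {k ∈ S | k - n ∈ S}) (t' := S)
    (s' := fun k => {n ∈ S - S | k - n ∈ S})]
  · refine sum_congr rfl fun k hk => ?_
    refine sum_nbij' (fun l => k - l) (fun n => k - n) (fun l hl => ?_) (fun n hn => ?_)
      (fun l _ => sub_sub_cancel k l) (fun n _ => sub_sub_cancel k n) (fun l _ => ?_)
    · exact mem_filter.mpr ⟨sub_mem_sub hk hl, by rwa [sub_sub_cancel]⟩
    · exact (mem_filter.mp hn).2
    · rw [sub_sub_cancel]
  · simp only [mem_filter]
    tauto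

section Correlation

variable {d : ℕ}

theorem ofReal_norm_sq_sum_eChar (S : Finset (Fin d → ℤ)) (b : (Fin d → ℤ) → ℂ) (x : Td d) :
    ((‖∑ k ∈ S, b k * eChar k x‖ ^ 2 : ℝ) : ℂ) =
      ∑ k ∈ S, ∑ l ∈ S, b k * conj (b l) * eChar (k - l) x := by
  rw [Complex.ofReal_pow, ← Complex.mul_conj', map_sum, sum_mul_sum]
  refine sum_congr rfl fun k _ => sum_congr rfl fun l _ => ?_
  rw [map_mul, ← eChar_mul_conj]
  ring

theorem integral_norm_sq_sum_eChar (S : Finset (Fin d → ℤ)) (b : (Fin d → ℤ) → ℂ) :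
    ∫ x, ‖∑ k ∈ S, b k * eChar k x‖ ^ 2 ∂(haarT d) = ∑ k ∈ S, ‖b k‖ ^ 2 := by
  apply Complex.ofReal_injective
  have hint : ∀ k l, Integrable (fun x => b k * conj (b l) * eChar (k - l) x) (haarT d) :=
    fun k l => (integrable_eChar _).const_mul _
  rw [← integral_complex_ofReal, integral_congr_ae (.of_forall (ofReal_norm_sq_sum_eChar S b)),
    integral_finsetSum _ fun k _ => integrable_finsetSum _ fun l _ => hint k l]
  simp_rw [integral_finsetSum _ fun l _ => hint _ l, integral_const_mul, integral_eChar,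
    sub_eq_zero, mul_ite, mul_one, mul_zero, sum_ite_eq, Complex.mul_conj', Complex.ofReal_sum,
    Complex.ofReal_pow]
  simp

def autocorr (S : Finset (Fin d → ℤ)) (c : (Fin d → ℤ) → ℂ) (n : Fin d → ℤ) : ℂ :=
  ∑ k ∈ S with k - n ∈ S, c k * conj (c (k - n))

theorem ofReal_norm_sq_sum_eChar_eq_sum_autocorr (S : Finset (Fin d → ℤ)) (c : (Fin d → ℤ) → ℂ)
    (x : Td d) :
    ((‖∑ k ∈ S, c k * eChar k x‖ ^ 2 : ℝ) : ℂ) = ∑ n ∈ S - S, autocorr S c n * eChar n x := by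
  rw [ofReal_norm_sq_sum_eChar, sum_sum_eq_sum_sub]
  simp only [autocorr, sum_mul, sub_sub_cancel]

theorem integral_norm_pow_four_sum_eChar (S : Finset (Fin d → ℤ)) (c : (Fin d → ℤ) → ℂ) :
    ∫ x, ‖∑ k ∈ S, c k * eChar k x‖ ^ 4 ∂(haarT d) = ∑ n ∈ S - S, ‖autocorr S c n‖ ^ 2 := by
  rw [← integral_norm_sq_sum_eChar]
  refine integral_congr_ae (.of_forall fun x => ?_)
  dsimp only
  rw [← ofReal_norm_sq_sum_eChar_eq_sum_autocorr, Complex.norm_real, Real.norm_eq_abs,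
    abs_of_nonneg (by positivity)]
  ring

theorem autocorr_zero (S : Finset (Fin d → ℤ)) (c : (Fin d → ℤ) → ℂ) :
    autocorr S c 0 = ((∑ k ∈ S, ‖c k‖ ^ 2 : ℝ) : ℂ) := by
  simp [autocorr, Complex.mul_conj']

theorem norm_sq_autocorr_le (S : Finset (Fin d → ℤ)) (c : (Fin d → ℤ) → ℂ) (n : Fin d → ℤ) :
    ‖autocorr S c n‖ ^ 2 ≤
      #{k ∈ S | k - n ∈ S} * ∑ k ∈ S with k - n ∈ S, ‖c k‖ ^ 2 * ‖c (k - n)‖ ^ 2 := by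
  calc ‖autocorr S c n‖ ^ 2 ≤ (∑ k ∈ S with k - n ∈ S, ‖c k‖ * ‖c (k - n)‖) ^ 2 := by
        gcongr
        refine (norm_sum_le _ _).trans_eq (sum_congr rfl fun k _ => ?_)
        rw [norm_mul, RCLike.norm_conj]
    _ ≤ _ := by
        simp_rw [← mul_pow]
        exact sq_sum_le_card_mul_sum_sq

end Correlation

theorem eq_sub_of_sq_add_sq_eq {E : ℤ} {n a b : Fin 2 → ℤ} (hn : n ≠ 0)
    (ha : a 0 ^ 2 + a 1 ^ 2 = E) (ha' : (a 0 - n 0) ^ 2 + (a 1 - n 1) ^ 2 = E)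
    (hb : b 0 ^ 2 + b 1 ^ 2 = E) (hb' : (b 0 - n 0) ^ 2 + (b 1 - n 1) ^ 2 = E) (hab : a ≠ b) :
    b = n - a := by
  -- `a + b - n` is orthogonal to `n`, and parallel to it since `a - b ≠ 0` is orthogonal to both.
  have hdot : n 0 * (a 0 + b 0 - n 0) + n 1 * (a 1 + b 1 - n 1) = 0 := by
    have h : 2 * (n 0 * (a 0 + b 0 - n 0) + n 1 * (a 1 + b 1 - n 1)) = 0 := by
      linear_combination ha - ha' + hb - hb'
    omega
  have hcross : (a 0 + b 0) * n 1 - (a 1 + b 1) * n 0 = 0 := by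
    have hn_perp : n 0 * (a 0 - b 0) + n 1 * (a 1 - b 1) = 0 := by
      have h : 2 * (n 0 * (a 0 - b 0) + n 1 * (a 1 - b 1)) = 0 := by
        linear_combination ha - ha' - hb + hb'
      omega
    have hsum_perp : (a 0 + b 0) * (a 0 - b 0) + (a 1 + b 1) * (a 1 - b 1) = 0 := by
      linear_combination ha - hb
    by_cases h0 : a 0 = b 0
    · have h1 : a 1 - b 1 ≠ 0 := fun h1 => hab (funext (Fin.forall_fin_two.mpr ⟨h0, by omega⟩))
      refine (mul_eq_zero.mp ?_).resolve_left h1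
      linear_combination (a 0 + b 0) * hn_perp - n 0 * hsum_perp
    · refine (mul_eq_zero.mp ?_).resolve_left (sub_ne_zero.mpr h0)
      linear_combination n 1 * hsum_perp - (a 1 + b 1) * hn_perp
  have hnorm : n 0 ^ 2 + n 1 ^ 2 ≠ 0 := by
    contrapose! hn
    ext i
    fin_cases i <;> simp only [Fin.zero_eta, Fin.mk_one, Fin.isValue, Pi.zero_apply] <;>
      nlinarith [sq_nonneg (n 0), sq_nonneg (n 1)]
  ext i
  fin_cases i
  · have h : (n 0 ^ 2 + n 1 ^ 2) * (a 0 + b 0 - n 0) = 0 := by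
      linear_combination n 0 * hdot + n 1 * hcross
    simp only [Fin.zero_eta, Fin.isValue, Pi.sub_apply]
    linarith [(mul_eq_zero.mp h).resolve_left hnorm]
  · have h : (n 0 ^ 2 + n 1 ^ 2) * (a 1 + b 1 - n 1) = 0 := by
      linear_combination n 1 * hdot - n 0 * hcross
    simp only [Fin.mk_one, Fin.isValue, Pi.sub_apply]
    linarith [(mul_eq_zero.mp h).resolve_left hnorm]

theorem card_filter_sub_mem_le_two {E : ℤ} {S : Finset (Fin 2 → ℤ)}
    (hS : ∀ k ∈ S, k 0 ^ 2 + k 1 ^ 2 = E) {n : Fin 2 → ℤ} (hn : n ≠ 0) :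
    #{k ∈ S | k - n ∈ S} ≤ 2 := by
  have hmem : ∀ k ∈ {k ∈ S | k - n ∈ S},
      k 0 ^ 2 + k 1 ^ 2 = E ∧ (k 0 - n 0) ^ 2 + (k 1 - n 1) ^ 2 = E := fun k hk => by
    obtain ⟨hk, hkn⟩ := mem_filter.mp hk
    exact ⟨hS k hk, hS _ hkn⟩
  rcases eq_empty_or_nonempty {k ∈ S | k - n ∈ S} with hT | ⟨a, ha⟩
  · simp [hT]
  refine (card_le_card (t := {a, n - a}) fun b hb => ?_).trans card_le_two
  rw [mem_insert, mem_singleton]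
  by_cases hab : a = b
  · exact .inl hab.symm
  · exact .inr (eq_sub_of_sq_add_sq_eq hn (hmem a ha).1 (hmem a ha).2 (hmem b hb).1
      (hmem b hb).2 hab)

theorem sum_norm_sq_autocorr_le_three {E : ℤ} {S : Finset (Fin 2 → ℤ)}
    (hS : ∀ k ∈ S, k 0 ^ 2 + k 1 ^ 2 = E) {c : (Fin 2 → ℤ) → ℂ} (hc : ∑ k ∈ S, ‖c k‖ ^ 2 = 1) :
    ∑ n ∈ S - S, ‖autocorr S c n‖ ^ 2 ≤ 3 := by
  set F : (Fin 2 → ℤ) → ℝ := fun n => ∑ k ∈ S with k - n ∈ S, ‖c k‖ ^ 2 * ‖c (k - n)‖ ^ 2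
  have hF : ∑ n ∈ S - S, F n = 1 := by
    rw [← sum_sum_eq_sum_sub S fun k l => ‖c k‖ ^ 2 * ‖c l‖ ^ 2, ← sum_mul_sum, hc, one_mul]
  have hpoint : ∀ n, ‖autocorr S c n‖ ^ 2 ≤ (if n = 0 then 1 else 0) + 2 * F n := by
    intro n
    have hF_nonneg : 0 ≤ F n := sum_nonneg fun k _ => by positivity
    split_ifs with hn
    · subst hn
      rw [autocorr_zero, hc]
      simpa using hF_nonneg
    · rw [zero_add]
      refine (norm_sq_autocorr_le S c n).trans (mul_le_mul_of_nonneg_right ?_ hF_nonneg)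
      exact_mod_cast card_filter_sub_mem_le_two hS hn
  calc ∑ n ∈ S - S, ‖autocorr S c n‖ ^ 2
      ≤ ∑ n ∈ S - S, ((if n = 0 then 1 else 0) + 2 * F n) := sum_le_sum fun n _ => hpoint n
    _ = (if 0 ∈ S - S then 1 else 0) + 2 := by
      rw [sum_add_distrib, sum_ite_eq', ← mul_sum, hF, mul_one]
    _ ≤ 3 := by split_ifs <;> norm_num

theorem finite_setOf_sum_sq_eq (d : ℕ) (E : ℤ) : {k : Fin d → ℤ | ∑ i, k i ^ 2 = E}.Finite := by
  refine (Fintype.piFinset fun _ => Icc (-E) E).finite_toSet.subset fun k hk => ?_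
  rw [mem_coe, Fintype.mem_piFinset]
  intro i
  have hki : k i ^ 2 ≤ E := hk ▸ single_le_sum (fun j _ => sq_nonneg (k j)) (mem_univ i)
  have habs : |k i| ≤ k i ^ 2 := Int.abs_eq_natAbs (k i) ▸ Int.natAbs_le_self_sq (k i)
  exact mem_Icc.mpr (abs_le.mp (habs.trans hki))

theorem znorm_sq {d : ℕ} (k : Fin d → ℤ) : znorm k ^ 2 = ∑ i, (k i : ℝ) ^ 2 :=
  Real.sq_sqrt (by positivity)

/-- Zygmund's estimate — uniform `L⁴` bound in dimension 2. -/
theorem statement7 (E : ℕ) (ψ : Td 2 → ℂ) (c : (Fin 2 → ℤ) → ℂ)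
    (hsupp : ∀ k, c k ≠ 0 → znorm k ^ 2 = E)
    (hrepr : ∀ x, ψ x = ∑' k : Fin 2 → ℤ, c k * eChar k x)
    (hnorm : ∑' k : Fin 2 → ℤ, ‖c k‖ ^ 2 = 1) :
    (∫ x, ‖ψ x‖ ^ 4 ∂(haarT 2)) ≤ 3 ∧
      (∫ x, ‖ψ x‖ ^ 4 ∂(haarT 2)) ^ ((1 : ℝ) / 4) ≤ (3 : ℝ) ^ ((1 : ℝ) / 4) := by
  set S := (finite_setOf_sum_sq_eq 2 E).toFinset
  have hS : ∀ k ∈ S, k 0 ^ 2 + k 1 ^ 2 = E := fun k hk => by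
    simpa [S, Fin.sum_univ_two] using hk
  have hcS : ∀ k ∉ S, c k = 0 := fun k hk => by
    by_contra hck
    refine hk ((Set.Finite.mem_toFinset _).mpr ?_)
    have h := hsupp k hck
    rw [znorm_sq] at h
    exact_mod_cast h
  have hψ : ψ = fun x => ∑ k ∈ S, c k * eChar k x :=
    funext fun x => (hrepr x).trans (tsum_eq_sum fun k hk => by rw [hcS k hk, zero_mul])
  have hc : ∑ k ∈ S, ‖c k‖ ^ 2 = 1 := by
    rw [← hnorm, tsum_eq_sum fun k hk => by rw [hcS k hk, norm_zero, sq, zero_mul]]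
  have hL4 : ∫ x, ‖ψ x‖ ^ 4 ∂(haarT 2) ≤ 3 := by
    rw [hψ, integral_norm_pow_four_sum_eChar]
    exact sum_norm_sq_autocorr_le_three hS hc
  exact ⟨hL4, rpow_le_rpow (integral_nonneg fun x => by positivity) hL4 (by norm_num)⟩
end
end

section
/- There exists a constant c_d > 0 depending only on d ≥ 2 such that for every λ > 0 and every n ∈ ℤ^d∖{0}, one has #{k ∈ ℤ^d : ‖k‖ ≤ λ and ‖k‖² = ‖n+k‖²} ≤ c_d λ^{d−1}/‖n̂‖. -/
open MeasureTheory Real BigOperators ComplexConjugate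

noncomputable section

/-! The condition `‖k‖ = ‖n + k‖` says `2⟪n, k⟫ = -‖n‖²`, so the points counted lie on a single
hyperplane `⟪n̂, k⟫ = t`, inside the cube `‖k‖∞ ≤ ⌈λ⌉`. Since `n̂` is primitive, Bézout gives for
each `0 ≤ s ≤ ⌈λ⌉ ‖n̂‖∞` a lattice vector `w_s` with `⟪n̂, w_s⟫ = s` and coordinates `O_d(λ)`.
The translates of the counted set by the `w_s` lie on distinct parallel hyperplanes, hence are
disjoint, and all lie in a cube of side `O_d(λ)`. So the count times `λ ‖n̂‖∞` is `O_d(λ^d)`,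
and `‖n̂‖ ≤ d ‖n̂‖∞`. -/

open Finset
open scoped Pointwise

section Lattice

variable {ι : Type*} [Fintype ι]

lemma ne_zero_of_gcd_eq_one_of_abs_le {v : ι → ℤ} (hv : univ.gcd v = 1) {i₀ : ι}
    (hmax : ∀ j, |v j| ≤ |v i₀|) : v i₀ ≠ 0 := by
  intro h0
  have hv0 : univ.gcd v = 0 := gcd_eq_zero_iff.mpr fun j _ =>
    abs_nonpos_iff.mp (by simpa [h0] using hmax j)
  exact one_ne_zero (hv.symm.trans hv0)

lemma exists_dotProduct_eq_of_gcd_eq_one [DecidableEq ι] {v : ι → ℤ} (hv : univ.gcd v = 1)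
    {i₀ : ι} (hq : v i₀ ≠ 0) (s : ℤ) :
    ∃ w : ι → ℤ, v ⬝ᵥ w = s ∧ ∀ j ≠ i₀, |w j| < |v i₀| := by
  obtain ⟨u, hu⟩ := univ.gcd_eq_sum_mul v
  -- reduce the Bézout solution `s • u` modulo `v i₀` off `i₀`, compensating in coordinate `i₀`
  set w : ι → ℤ := Function.update (fun j => s * u j % v i₀) i₀
    (s * u i₀ + ∑ j ∈ univ.erase i₀, v j * (s * u j / v i₀))
  have hw_i₀ : w i₀ = s * u i₀ + ∑ j ∈ univ.erase i₀, v j * (s * u j / v i₀) :=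
    Function.update_self ..
  have hw_ne : ∀ j ≠ i₀, w j = s * u j % v i₀ := fun j hj => Function.update_of_ne hj _ _
  refine ⟨w, ?_, fun j hj => ?_⟩
  · have hrest : ∑ j ∈ univ.erase i₀, v j * w j = ∑ j ∈ univ.erase i₀, v j * (s * u j % v i₀) :=
      sum_congr rfl fun j hj => by rw [hw_ne j (ne_of_mem_erase hj)]
    rw [dotProduct, ← add_sum_erase _ _ (mem_univ i₀), hw_i₀, hrest, mul_add, mul_sum, add_assoc,
      ← sum_add_distrib]
    calc v i₀ * (s * u i₀) + ∑ j ∈ univ.erase i₀,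
          (v i₀ * (v j * (s * u j / v i₀)) + v j * (s * u j % v i₀))
        = v i₀ * (s * u i₀) + ∑ j ∈ univ.erase i₀, v j * (s * u j) := by
          congr 1
          exact sum_congr rfl fun j _ => by rw [Int.emod_def]; ring
      _ = s * ∑ j, v j * u j := by
          rw [add_sum_erase _ (fun j => v j * (s * u j)) (mem_univ i₀), mul_sum]
          exact sum_congr rfl fun j _ => by ring
      _ = s := by rw [← hu, hv, mul_one]
  · rw [hw_ne j hj, abs_of_nonneg (Int.emod_nonneg _ hq)]
    exact Int.emod_lt_abs _ hq

lemma abs_mul_abs_le_of_dotProduct_eq [DecidableEq ι] {v w : ι → ℤ} {s : ℤ} (hw : v ⬝ᵥ w = s)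
    {i₀ : ι} (hmax : ∀ j, |v j| ≤ |v i₀|) (hw_ne : ∀ j ≠ i₀, |w j| ≤ |v i₀|) (j : ι) :
    |v i₀| * |w j| ≤ |s| + Fintype.card ι * |v i₀| ^ 2 := by
  by_cases hj : j = i₀
  · subst hj
    have hsplit : v j * w j = s - ∑ i ∈ univ.erase j, v i * w i := by
      rw [← hw, dotProduct, ← add_sum_erase _ _ (mem_univ j)]; ring
    have hrest : |∑ i ∈ univ.erase j, v i * w i| ≤ Fintype.card ι * |v j| ^ 2 := calc
      |∑ i ∈ univ.erase j, v i * w i| ≤ ∑ i ∈ univ.erase j, |v i * w i| :=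
          abs_sum_le_sum_abs _ _
      _ ≤ ∑ _i ∈ univ.erase j, |v j| ^ 2 := sum_le_sum fun i hi => by
          rw [abs_mul, sq]
          exact mul_le_mul (hmax i) (hw_ne i (ne_of_mem_erase hi)) (abs_nonneg _) (abs_nonneg _)
      _ ≤ Fintype.card ι * |v j| ^ 2 := by
          rw [sum_const, nsmul_eq_mul]
          gcongr
          exact_mod_cast card_erase_le
    rw [← abs_mul, hsplit]
    exact (abs_sub _ _).trans (by linarith)
  · have hcard : (1 : ℤ) ≤ Fintype.card ι := by exact_mod_cast Fintype.card_pos_iff.mpr ⟨i₀⟩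
    calc |v i₀| * |w j| ≤ |v i₀| ^ 2 := by
          rw [sq]; exact mul_le_mul_of_nonneg_left (hw_ne j hj) (abs_nonneg _)
      _ ≤ |s| + Fintype.card ι * |v i₀| ^ 2 := by nlinarith [abs_nonneg s, sq_nonneg |v i₀|]

lemma card_add_of_dotProduct_const [DecidableEq ι] {v : ι → ℤ} {S W : Finset (ι → ℤ)}
    (hS : ∀ k ∈ S, ∀ k' ∈ S, v ⬝ᵥ k = v ⬝ᵥ k') (hW : Set.InjOn (v ⬝ᵥ ·) W) :
    #(S + W) = #S * #W := by
  refine card_add_iff.mpr ?_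
  rintro ⟨k, w⟩ ⟨hk, hw⟩ ⟨k', w'⟩ ⟨hk', hw'⟩ h
  simp only at h hk hw hk' hw'
  have hww' : w = w' := hW hw hw' (by
    have := congrArg (v ⬝ᵥ ·) h
    simp only [dotProduct_add] at this
    linarith [hS k hk k' hk'])
  subst hww'
  simp [add_left_injective w h]

lemma mem_piFinset_Icc_iff [DecidableEq ι] {B : ℤ} {k : ι → ℤ} :
    k ∈ Fintype.piFinset (fun _ : ι => Icc (-B) B) ↔ ∀ j, |k j| ≤ B := by
  simp only [Fintype.mem_piFinset, mem_Icc, abs_le]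

lemma card_piFinset_Icc [DecidableEq ι] (B : ℕ) :
    #(Fintype.piFinset fun _ : ι => Icc (-(B : ℤ)) B) = (2 * B + 1) ^ Fintype.card ι := by
  rw [Fintype.card_piFinset, prod_const, Int.card_Icc, card_univ]
  congr 1
  omega

lemma exists_finset_dotProduct_injOn [DecidableEq ι] {v : ι → ℤ} (hv : univ.gcd v = 1)
    {i₀ : ι} (hmax : ∀ j, |v j| ≤ |v i₀|) (L : ℕ) :
    ∃ W : Finset (ι → ℤ), #W = L * (v i₀).natAbs + 1 ∧ Set.InjOn (v ⬝ᵥ ·) W ∧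
      ∀ x ∈ W, ∀ j, |x j| ≤ L + Fintype.card ι * (v i₀).natAbs := by
  set q := (v i₀).natAbs
  have hq : (q : ℤ) = |v i₀| := Int.natCast_natAbs _
  have hv₀ := ne_zero_of_gcd_eq_one_of_abs_le hv hmax
  have hq0 : (0 : ℤ) < q := hq ▸ abs_pos.mpr hv₀
  choose w hw hw_lt using exists_dotProduct_eq_of_gcd_eq_one hv hv₀
  have hw_inj : Function.Injective fun s : ℕ => w s := fun s s' h => by
    simpa [hw] using congrArg (v ⬝ᵥ ·) h
  refine ⟨(range (L * q + 1)).image fun s : ℕ => w s, ?_, ?_, ?_⟩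
  · rw [card_image_of_injective _ hw_inj, card_range]
  · rintro _ hs _ hs' h
    obtain ⟨s, -, rfl⟩ := mem_image.mp hs
    obtain ⟨s', -, rfl⟩ := mem_image.mp hs'
    simp_all
  · intro x hx j
    obtain ⟨s, hs, rfl⟩ := mem_image.mp hx
    have hsL : (s : ℤ) ≤ L * q := by exact_mod_cast Nat.lt_succ_iff.mp (mem_range.mp hs)
    have := abs_mul_abs_le_of_dotProduct_eq (hw s) hmax (fun j hj => (hw_lt s j hj).le) j
    rw [← hq, abs_of_nonneg (by positivity : (0 : ℤ) ≤ s)] at this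
    nlinarith

lemma ncard_mul_le_of_dotProduct_const [DecidableEq ι] {v : ι → ℤ} (hv : univ.gcd v = 1)
    {i₀ : ι} (hmax : ∀ j, |v j| ≤ |v i₀|) {L : ℕ} {S : Set (ι → ℤ)}
    (hL : ∀ k ∈ S, ∀ j, |k j| ≤ L) (hS : ∀ k ∈ S, ∀ k' ∈ S, v ⬝ᵥ k = v ⬝ᵥ k') :
    S.ncard * (L * (v i₀).natAbs + 1)
      ≤ (4 * L + 2 * Fintype.card ι * (v i₀).natAbs + 1) ^ Fintype.card ι := by
  obtain ⟨W, hW_card, hW_inj, hW_small⟩ := exists_finset_dotProduct_injOn hv hmax L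
  obtain ⟨T, rfl⟩ : ∃ T : Finset (ι → ℤ), ↑T = S :=
    ((Fintype.piFinset fun _ : ι => Icc (-(L : ℤ)) L).finite_toSet.subset
      fun k hk => mem_piFinset_Icc_iff.mpr (hL k hk)).exists_finset_coe
  set B := 2 * L + Fintype.card ι * (v i₀).natAbs
  have hsub : T + W ⊆ Fintype.piFinset fun _ : ι => Icc (-(B : ℤ)) B := by
    intro x hx
    obtain ⟨k, hk, y, hy, rfl⟩ := mem_add.mp hx
    refine mem_piFinset_Icc_iff.mpr fun j => ?_
    have := abs_add_le (k j) (y j)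
    have := hL k hk j
    have := hW_small y hy j
    simp only [Pi.add_apply, B, Nat.cast_add, Nat.cast_mul, Nat.cast_ofNat]
    linarith
  calc (T : Set (ι → ℤ)).ncard * (L * (v i₀).natAbs + 1) = #(T + W) := by
        rw [Set.ncard_coe_finset, card_add_of_dotProduct_const hS hW_inj, hW_card]
    _ ≤ (2 * B + 1) ^ Fintype.card ι := (card_le_card hsub).trans (card_piFinset_Icc B).le
    _ = _ := by simp only [B]; ring

end Lattice

section LatticeNorm

variable {d : ℕ}

lemma znorm_eq_norm (k : Fin d → ℤ) :
    znorm k = ‖(WithLp.toLp 2 (fun i => (k i : ℝ)) : EuclideanSpace ℝ (Fin d))‖ := by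
  simp [znorm, EuclideanSpace.norm_eq]

lemma znorm_nonneg (k : Fin d → ℤ) : 0 ≤ znorm k := Real.sqrt_nonneg _

lemma abs_le_znorm (k : Fin d → ℤ) (i : Fin d) : |(k i : ℝ)| ≤ znorm k := by
  simpa [znorm_eq_norm] using PiLp.norm_apply_le (WithLp.toLp 2 fun i => (k i : ℝ)) i

lemma one_le_znorm {k : Fin d → ℤ} (hk : k ≠ 0) : 1 ≤ znorm k := by
  obtain ⟨i, hi⟩ := Function.ne_iff.mp hk
  exact le_trans (by exact_mod_cast Int.one_le_abs hi) (abs_le_znorm k i)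

lemma znorm_le_znorm_add_add (n k : Fin d → ℤ) : znorm n ≤ znorm (n + k) + znorm k := by
  have h : (WithLp.toLp 2 (fun i => (n i : ℝ)) : EuclideanSpace ℝ (Fin d))
      = WithLp.toLp 2 (fun i => ((n + k) i : ℝ)) - WithLp.toLp 2 (fun i => (k i : ℝ)) := by
    ext i; simp
  rw [znorm_eq_norm, znorm_eq_norm, znorm_eq_norm, h]
  exact norm_sub_le _ _

lemma znorm_le_of_abs_le {k : Fin d → ℤ} {q : ℕ} (hk : ∀ i, |k i| ≤ q) :
    znorm k ≤ d * q := by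
  refine Real.sqrt_le_iff.mpr ⟨by positivity, ?_⟩
  calc ∑ i, (k i : ℝ) ^ 2 ≤ ∑ _i : Fin d, (q : ℝ) ^ 2 := sum_le_sum fun i _ => by
        rw [← sq_abs]
        exact pow_le_pow_left₀ (abs_nonneg _) (by exact_mod_cast hk i) 2
    _ = d * q ^ 2 := by simp
    _ ≤ (d * q) ^ 2 := by
        rw [mul_pow]
        gcongr
        exact_mod_cast Nat.le_self_pow two_ne_zero d

lemma znorm_eq_znorm_add_iff {n k : Fin d → ℤ} :
    znorm k = znorm (n + k) ↔ 2 * (n ⬝ᵥ k) + n ⬝ᵥ n = 0 := by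
  rw [znorm, znorm, Real.sqrt_inj (by positivity) (by positivity)]
  have hexp : ∑ i, ((n + k) i : ℝ) ^ 2
      = ∑ i, (k i : ℝ) ^ 2 + ((2 * (n ⬝ᵥ k) + n ⬝ᵥ n : ℤ) : ℝ) := by
    simp only [dotProduct, Pi.add_apply]
    push_cast
    rw [mul_sum, ← sum_add_distrib, ← sum_add_distrib]
    exact sum_congr rfl fun i _ => by ring
  rw [hexp]
  constructor
  · intro h; exact_mod_cast (add_eq_left.mp h.symm)
  · intro h; rw [h]; simp

end LatticeNorm

section PrimitivePart

variable {d : ℕ}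

lemma gcd_mul_primPart (n : Fin d → ℤ) (i : Fin d) : univ.gcd n * primPart n i = n i :=
  Int.mul_ediv_cancel' (gcd_dvd (mem_univ i))

lemma gcd_ne_zero_of_ne_zero {n : Fin d → ℤ} (hn : n ≠ 0) : univ.gcd n ≠ 0 := fun h =>
  hn (funext fun i => gcd_eq_zero_iff.mp h i (mem_univ i))

lemma gcd_primPart {n : Fin d → ℤ} (hn : n ≠ 0) : univ.gcd (primPart n) = 1 := by
  obtain ⟨i, hi⟩ := Function.ne_iff.mp hn
  exact gcd_div_eq_one (mem_univ i) hi

lemma primPart_ne_zero {n : Fin d → ℤ} (hn : n ≠ 0) : primPart n ≠ 0 := fun h =>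
  one_ne_zero ((gcd_primPart hn).symm.trans (gcd_eq_zero_iff.mpr fun i _ => by simp [h]))

lemma abs_primPart_le {n : Fin d → ℤ} (hn : n ≠ 0) (i : Fin d) : |primPart n i| ≤ |n i| := by
  rw [← gcd_mul_primPart n i, abs_mul]
  exact le_mul_of_one_le_left (abs_nonneg _) (Int.one_le_abs (gcd_ne_zero_of_ne_zero hn))

lemma dotProduct_primPart_eq_of_znorm_eq {n k k' : Fin d → ℤ} (hn : n ≠ 0)
    (hk : znorm k = znorm (n + k)) (hk' : znorm k' = znorm (n + k')) :
    primPart n ⬝ᵥ k = primPart n ⬝ᵥ k' := by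
  have hdot : ∀ k, n ⬝ᵥ k = univ.gcd n * (primPart n ⬝ᵥ k) := fun k => by
    simp only [dotProduct, mul_sum, ← mul_assoc, gcd_mul_primPart]
  rw [znorm_eq_znorm_add_iff, hdot] at hk hk'
  exact mul_left_cancel₀ (gcd_ne_zero_of_ne_zero hn) (by linarith)

end PrimitivePart

lemma ncard_bisector_mul_le {d : ℕ} {n : Fin d → ℤ} (hn : n ≠ 0) {lam : ℝ} (hlam : 0 ≤ lam)
    {i₀ : Fin d} (hmax : ∀ j, |primPart n j| ≤ |primPart n i₀|) :
    (Set.ncard {k : Fin d → ℤ | znorm k ≤ lam ∧ znorm k = znorm (n + k)} : ℝ)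
      * ((primPart n i₀).natAbs * lam) ≤ (13 * d * lam) ^ d := by
  set S := {k : Fin d → ℤ | znorm k ≤ lam ∧ znorm k = znorm (n + k)}
  rcases S.eq_empty_or_nonempty with hS | ⟨k₀, hk₀_le, hk₀⟩
  · rw [hS, Set.ncard_empty, Nat.cast_zero, zero_mul]
    positivity
  have hk₀_ne : k₀ ≠ 0 := by
    rintro rfl
    rw [znorm_eq_znorm_add_iff, dotProduct_zero, mul_zero, zero_add,
      dotProduct_self_eq_zero] at hk₀
    exact hn hk₀
  have hlam1 : 1 ≤ lam := (one_le_znorm hk₀_ne).trans hk₀_le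
  set q := (primPart n i₀).natAbs
  set L := ⌈lam⌉₊
  have hcount := ncard_mul_le_of_dotProduct_const (gcd_primPart hn) hmax (L := L) (S := S)
    (fun k hk j => by exact_mod_cast (abs_le_znorm k j).trans (hk.1.trans (Nat.le_ceil lam)))
    (fun k hk k' hk' => dotProduct_primPart_eq_of_znorm_eq hn hk.2 hk'.2)
  rw [Fintype.card_fin] at hcount
  have hq : (q : ℝ) ≤ 2 * lam := calc
    (q : ℝ) ≤ |(n i₀ : ℝ)| := by
      rw [Nat.cast_natAbs, ← Int.cast_abs]; exact_mod_cast abs_primPart_le hn i₀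
    _ ≤ znorm n := abs_le_znorm n i₀
    _ ≤ znorm (n + k₀) + znorm k₀ := znorm_le_znorm_add_add n k₀
    _ ≤ 2 * lam := by rw [← hk₀]; linarith
  have hL : (L : ℝ) ≤ 2 * lam := by linarith [Nat.ceil_lt_add_one hlam]
  have hcount' : (S.ncard : ℝ) * (L * q + 1) ≤ (4 * L + 2 * d * q + 1) ^ d := by
    exact_mod_cast hcount
  calc (S.ncard : ℝ) * (q * lam) ≤ S.ncard * (L * q + 1) := by
        gcongr
        nlinarith [Nat.le_ceil lam, Nat.cast_nonneg (α := ℝ) q]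
    _ ≤ (4 * L + 2 * d * q + 1) ^ d := hcount'
    _ ≤ (13 * d * lam) ^ d := by
        have hd : (1 : ℝ) ≤ d := by exact_mod_cast i₀.pos
        gcongr
        nlinarith

/-- lattice point count on the bisector hyperplane, long intervals. -/
theorem statement9 (d : ℕ) (hd : 2 ≤ d) :
    ∃ c : ℝ, 0 < c ∧ ∀ lam : ℝ, 0 < lam → ∀ n : Fin d → ℤ, n ≠ 0 →
      (Set.ncard {k : Fin d → ℤ | znorm k ≤ lam ∧ znorm k = znorm (n + k)} : ℝ)
        ≤ c * lam ^ (d - 1) / znorm (primPart n) := by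
  refine ⟨d * (13 * d) ^ d, by positivity, fun lam hlam n hn => ?_⟩
  set S := {k : Fin d → ℤ | znorm k ≤ lam ∧ znorm k = znorm (n + k)}
  obtain ⟨i₀, -, hmax⟩ := exists_max_image univ (fun i => |primPart n i|)
    ⟨⟨0, by omega⟩, mem_univ _⟩
  set q := (primPart n i₀).natAbs
  have hnorm : znorm (primPart n) ≤ d * q :=
    znorm_le_of_abs_le fun i => by simpa [q] using hmax i (mem_univ i)
  have hcount := ncard_bisector_mul_le hn hlam.le fun j => hmax j (mem_univ j)
  rw [le_div_iff₀ ((zero_lt_one).trans_le (one_le_znorm (primPart_ne_zero hn)))]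
  refine le_of_mul_le_mul_right ?_ hlam
  calc (S.ncard : ℝ) * znorm (primPart n) * lam ≤ S.ncard * (d * q) * lam := by gcongr
    _ = d * (S.ncard * (q * lam)) := by ring
    _ ≤ d * (13 * d * lam) ^ d := by gcongr
    _ = d * (13 * d) ^ d * lam ^ (d - 1) * lam := by
        rw [mul_assoc _ (lam ^ _), ← pow_succ, Nat.sub_add_cancel (by omega), mul_pow]; ring
end
end
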